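/- For every real t > 0, the function α ↦ pc(α,t) is differentiable at every α > a(t), and its derivative pc′ satisfies (pc(α,t) − 1)·pc′(α,t) = pc(α,t)·√(2π·pc(α,t)/t). -/

import Mathlib

/-- `a(t) = √(8t/π)` -/
noncomputable def a (t : ℝ) : ℝ := Real.sqrt (8 * t / Real.pi)

/-- `pc(α,t) = 2(α/a(t))²·(1 + √(1 − (a(t)/α)²)) − 1` -/
noncomputable def pc (α t : ℝ) : ℝ :=
  2 * (α / a t) ^ 2 * (1 + Real.sqrt (1 - (a t / α) ^ 2)) - 1

/-!
With `s = √(α² − a²)` and `q = (α + s)/a` one has `pc = q²`. Since `α + s` is differentiable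
with derivative `(α + s)/s`, this gives `pc′ = 2q²/s`, while `pc − 1 = 2sq/a` and
`√(2π·pc/t) = 4q/a` because `a² = 8t/π`; both sides of the identity equal `4q³/a`.
-/

open Real

lemma a_pos {t : ℝ} (ht : 0 < t) : 0 < a t :=
  sqrt_pos.mpr (by positivity)

lemma a_sq {t : ℝ} (ht : 0 ≤ t) : a t ^ 2 = 8 * t / π :=
  sq_sqrt (by positivity)

lemma pc_eq_sq {t β : ℝ} (ht : 0 < t) (hβ : a t < β) :
    pc β t = ((β + √(β ^ 2 - a t ^ 2)) / a t) ^ 2 := by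
  have hA := a_pos ht
  have hβ0 : 0 < β := hA.trans hβ
  have hs2 : √(β ^ 2 - a t ^ 2) ^ 2 = β ^ 2 - a t ^ 2 := sq_sqrt (by nlinarith)
  have hsqrt : √(1 - (a t / β) ^ 2) = √(β ^ 2 - a t ^ 2) / β := by
    rw [show 1 - (a t / β) ^ 2 = (β ^ 2 - a t ^ 2) / β ^ 2 by field_simp,
      sqrt_div' _ (sq_nonneg β), sqrt_sq hβ0.le]
  rw [pc, hsqrt]
  field_simp
  linear_combination -hs2

lemma hasDerivAt_add_sqrt_sq_sub {c x : ℝ} (hx : c < x ^ 2) :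
    HasDerivAt (fun y => y + √(y ^ 2 - c)) ((x + √(x ^ 2 - c)) / √(x ^ 2 - c)) x := by
  have hs : √(x ^ 2 - c) ≠ 0 := (sqrt_pos.mpr (sub_pos.mpr hx)).ne'
  refine ((hasDerivAt_id x).add
    (((hasDerivAt_pow 2 x).sub_const c).sqrt (sub_pos.mpr hx).ne')).congr_deriv ?_
  field_simp
  ring

lemma hasDerivAt_pc {t α : ℝ} (ht : 0 < t) (hα : a t < α) :
    HasDerivAt (fun β => pc β t)
      (2 * ((α + √(α ^ 2 - a t ^ 2)) / a t) ^ 2 / √(α ^ 2 - a t ^ 2)) α := by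
  have hA := a_pos ht
  have hpc : (fun β => pc β t) =ᶠ[nhds α] fun β => ((β + √(β ^ 2 - a t ^ 2)) / a t) ^ 2 := by
    filter_upwards [eventually_gt_nhds hα] with β hβ using pc_eq_sq ht hβ
  refine ((((hasDerivAt_add_sqrt_sq_sub (by nlinarith)).div_const (a t)).pow 2).congr_deriv
    ?_).congr_of_eventuallyEq hpc
  ring

lemma sqrt_two_mul_pi_mul_sq_div {t x : ℝ} (ht : 0 < t) (hx : 0 ≤ x) :
    √(2 * π * x ^ 2 / t) = 4 * x / a t := by
  have hA := a_pos ht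
  rw [← sqrt_sq (by positivity : 0 ≤ 4 * x / a t), div_pow, a_sq ht.le]
  congr 1
  field_simp
  ring

/-- Equation (A70): for `t > 0`, `α ↦ pc(α,t)` is differentiable at every
`α > a(t)` and its derivative satisfies `(pc − 1)·pc′ = pc·√(2π·pc/t)`. -/
theorem statement10 (t : ℝ) (ht : 0 < t) (α : ℝ) (hα : a t < α) :
    DifferentiableAt ℝ (fun β => pc β t) α ∧
    (pc α t - 1) * deriv (fun β => pc β t) α
      = pc α t * Real.sqrt (2 * Real.pi * pc α t / t) := by
  have hA := a_pos ht
  have hs : 0 < √(α ^ 2 - a t ^ 2) := sqrt_pos.mpr (by nlinarith)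
  have hs2 : √(α ^ 2 - a t ^ 2) ^ 2 = α ^ 2 - a t ^ 2 := sq_sqrt (by nlinarith)
  have hderiv := hasDerivAt_pc ht hα
  refine ⟨hderiv.differentiableAt, ?_⟩
  rw [hderiv.deriv, pc_eq_sq ht hα,
    sqrt_two_mul_pi_mul_sq_div ht (div_nonneg (by linarith [sqrt_nonneg (α ^ 2 - a t ^ 2)]) hA.le)]
  field_simp
  linear_combination (-2 * (α + √(α ^ 2 - a t ^ 2)) ^ 2) * hs2
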